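/- arXiv:1503.04579 — 2 statements merged into one kernel-verified Lean document; each statement's English description precedes it below -/
import Mathlib

section
/- For every natural number n ≥ 1, the determinant of the n×n rational matrix A(n) whose (i,j)-entry (for 1 ≤ i, j ≤ n) is the binomial coefficient C(2n−j+1, 2i−1) is nonzero. -/
open Polynomial

private lemma coeff_comp_neg_X' {R : Type*} [CommRing R] (p : R[X]) (k : ℕ) :
    (p.comp (-X)).coeff k = (-1) ^ k * p.coeff k := by
  induction p using Polynomial.induction_on' with
  | add p q hp hq => simp [add_comp, hp, hq, mul_add]
  | monomial m a =>
    have hm : (-X : R[X]) ^ m = C ((-1 : R) ^ m) * X ^ m := by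
      rw [map_pow, C_neg, C_1]; ring
    rw [← C_mul_X_pow_eq_monomial, mul_comp, C_comp, X_pow_comp, hm]
    simp only [coeff_C_mul, coeff_X_pow]
    split_ifs with h
    · subst h; ring
    · simp

/-- For every `n ≥ 1`, the determinant of the `n × n` rational matrix whose
`(i,j)`-entry (for `1 ≤ i, j ≤ n`) is the binomial coefficient `C(2n - j + 1, 2i - 1)`
is nonzero.  (Rows and columns are indexed by `Fin n`, with `i.val + 1`, `j.val + 1`
playing the roles of `i`, `j`.) -/
theorem det_binomial_matrix_ne_zero (n : ℕ) (hn : 1 ≤ n) :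
    Matrix.det (Matrix.of fun i j : Fin n =>
      ((2 * n - (j.val + 1) + 1).choose (2 * (i.val + 1) - 1) : ℚ)) ≠ 0 := by
  intro hdet
  obtain ⟨c, hc0, hc⟩ := Matrix.exists_mulVec_eq_zero_iff.mpr hdet
  -- the polynomial F(t) = ∑_j c_j t^(2n - j)
  set F : ℚ[X] := ∑ j : Fin n, C (c j) * X ^ (2 * n - j.val) with hF
  -- g = F(X+1)
  set g : ℚ[X] := F.comp (X + C 1) with hg
  have hgsum : g = ∑ j : Fin n, C (c j) * (X + C 1) ^ (2 * n - j.val) := by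
    simp [hg, hF, sum_comp, mul_comp]
  -- degree bounds
  have hFdeg : F.natDegree ≤ 2 * n := by
    apply Polynomial.natDegree_sum_le_of_forall_le
    intro j _
    refine le_trans (natDegree_C_mul_le _ _) ?_
    rw [Polynomial.natDegree_X_pow]
    omega
  have hgdeg : g.natDegree ≤ 2 * n := by
    rw [hg, natDegree_comp]
    have h1 : (X + C (1 : ℚ)).natDegree = 1 := by
      exact Polynomial.natDegree_X_add_C (1 : ℚ)
    rw [h1, mul_one]; exact hFdeg
  -- odd coefficients of g vanish
  have hodd : ∀ k : ℕ, Odd k → g.coeff k = 0 := by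
    intro k hk
    by_cases hkn : k ≤ 2 * n
    · obtain ⟨i, rfl⟩ := hk
      have hi : i < n := by omega
      have h := congrFun hc ⟨i, hi⟩
      simp only [Matrix.mulVec, dotProduct, Matrix.of_apply, Pi.zero_apply] at h
      rw [hgsum, finset_sum_coeff, ← h]
      apply Finset.sum_congr rfl
      intro j _
      rw [coeff_C_mul, coeff_X_add_C_pow]
      have h1 : 2 * n - (j.val + 1) + 1 = 2 * n - j.val := by
        have := j.isLt; omega
      have h2 : 2 * (i + 1) - 1 = 2 * i + 1 := by omega
      rw [h1, h2, one_pow, one_mul, mul_comm]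
    · exact Polynomial.coeff_eq_zero_of_natDegree_lt (by omega)
  -- g is even
  have hgeven : g.comp (-X) = g := by
    ext k
    rw [coeff_comp_neg_X']
    rcases Nat.even_or_odd k with he | ho
    · rw [he.neg_one_pow, one_mul]
    · rw [hodd k ho, mul_zero]
  -- F = g ∘ (X - 1)
  have hFg : g.comp (X - C 1) = F := by
    rw [hg, comp_assoc]
    have h1 : (X + C (1 : ℚ)).comp (X - C 1) = X := by
      rw [add_comp, X_comp, C_comp, sub_add_cancel]
    rw [h1, comp_X]
  -- symmetry F(2 - t) = F(t)
  have hsymm : F.comp (C 2 - X) = F := by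
    conv_lhs => rw [← hFg]
    rw [comp_assoc]
    have e1 : (X - C (1 : ℚ)).comp (C 2 - X) = (-X).comp (X - C 1) := by
      rw [sub_comp, X_comp, C_comp, neg_comp, X_comp,
        show (C 2 : ℚ[X]) = C 1 + C 1 by rw [← C_add]; norm_num]
      ring
    rw [e1, ← comp_assoc, hgeven, hFg]
  -- X^(n+1) ∣ F
  have hXdvd : (X : ℚ[X]) ^ (n + 1) ∣ F := by
    rw [hF]
    apply Finset.dvd_sum
    intro j _
    exact Dvd.dvd.mul_left (pow_dvd_pow X (by have := j.isLt; omega)) _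
  obtain ⟨q, hq⟩ := hXdvd
  -- (X - 2)^(n+1) ∣ F
  have hX2dvd : ((X - C 2 : ℚ[X])) ^ (n + 1) ∣ F := by
    refine ⟨(-1) ^ (n + 1) * q.comp (C 2 - X), ?_⟩
    calc F = F.comp (C 2 - X) := hsymm.symm
      _ = (X ^ (n + 1) * q).comp (C 2 - X) := by rw [← hq]
      _ = (C 2 - X) ^ (n + 1) * q.comp (C 2 - X) := by rw [mul_comp, X_pow_comp]
      _ = _ := by
          rw [show (C 2 - X : ℚ[X]) = -(X - C 2) by ring, neg_pow]
          ring
  have hcop : IsCoprime (X : ℚ[X]) (X - C 2) := by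
    refine ⟨C (1/2), -C (1/2), ?_⟩
    have h : (C (1/2 : ℚ)) * C 2 = 1 := by rw [← C_mul]; norm_num
    linear_combination h
  have hmul : (X : ℚ[X]) ^ (n + 1) * (X - C 2) ^ (n + 1) ∣ F :=
    (hcop.pow).mul_dvd ⟨q, hq⟩ hX2dvd
  have hF0 : F = 0 := by
    by_contra h0
    have hle := Polynomial.natDegree_le_of_dvd hmul h0
    rw [natDegree_mul (pow_ne_zero _ X_ne_zero)
        (pow_ne_zero _ (X_sub_C_ne_zero 2)),
      natDegree_pow, natDegree_pow, natDegree_X, natDegree_X_sub_C] at hle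
    omega
  -- conclude c = 0, contradiction
  apply hc0
  funext j
  have hcoeff : F.coeff (2 * n - j.val) = c j := by
    rw [hF, finset_sum_coeff, Finset.sum_eq_single j]
    · rw [coeff_C_mul, coeff_X_pow, if_pos rfl, mul_one]
    · intro b _ hb
      rw [coeff_C_mul, coeff_X_pow, if_neg, mul_zero]
      intro he
      exact hb (Fin.ext (by have := b.isLt; have := j.isLt; omega))
    · intro h; exact absurd (Finset.mem_univ j) h
  rw [← hcoeff, hF0, coeff_zero]
  rfl
end

section
/- Let n ≥ 1, let τ be a real number, and let M_1, M_3, …, M_{2n−1} be real numbers with M_1 ≠ 0. Suppose that for every j ∈ {1, …, n} one has Σ_{i=1}^{n} C(2n−j+1, 2i−1) · M_{2i−1} · τ^(2n−2i−j+2) = 0, where each term with 2i−1 > 2n−j+1 is interpreted as 0 (its binomial coefficient vanishes, so all occurring exponents are nonnegative). Then τ = 0. -/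
open Polynomial Finset

private lemma sqrt_one_add_X (n : ℕ) :
    ∃ A : Polynomial ℝ, A.natDegree ≤ n ∧ A.coeff 0 = 1 ∧ X ^ (n + 1) ∣ A ^ 2 - (1 + X) := by
  induction n with
  | zero =>
    refine ⟨1, by simp, by simp, ?_⟩
    have h : (1 : Polynomial ℝ) ^ 2 - (1 + X) = -X := by ring
    rw [h, pow_one]
    exact dvd_neg.mpr dvd_rfl
  | succ n ih =>
    obtain ⟨P, hd, h0, Q, hQ⟩ := ih
    set c : ℝ := -(Q.coeff 0) / 2 with hc
    refine ⟨P + C c * X ^ (n + 1), ?_, ?_, ?_⟩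
    · apply (natDegree_add_le _ _).trans
      apply max_le (hd.trans (by omega))
      apply (natDegree_C_mul_le _ _).trans
      simp [natDegree_X_pow]
    · simp [coeff_X_pow, mul_coeff_zero, h0]
    · have key : (P + C c * X ^ (n + 1)) ^ 2 - (1 + X)
          = X ^ (n + 1) * (Q + 2 * C c * P + C c ^ 2 * X ^ (n + 1)) := by
        have expand : (P + C c * X ^ (n + 1)) ^ 2 - (1 + X)
            = (P ^ 2 - (1 + X)) + X ^ (n + 1) * (2 * C c * P + C c ^ 2 * X ^ (n + 1)) := by
          ring
        rw [expand, hQ]; ring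
      rw [key, pow_succ]
      apply mul_dvd_mul_left
      rw [X_dvd_iff]
      simp [mul_coeff_zero, coeff_X_pow, h0, hc, coeff_one]
      ring

private lemma key_lemma (n : ℕ) (hn : 1 ≤ n) (x : ℕ → ℝ)
    (hx : ∀ s ∈ Finset.range n,
      ∑ i ∈ Finset.range n, ((n + 1 + s).choose (2 * i + 1) : ℝ) * x i = 0) :
    x 0 = 0 := by
  obtain ⟨A, hAdeg, hA0, Q, hQ⟩ := sqrt_one_add_X n
  set B : Polynomial ℝ := A.comp (X - 1) with hB
  -- B^2 - X = (X-1)^(n+1) * Q.comp (X-1)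
  have hcomp := congrArg (fun p : Polynomial ℝ => p.comp (X - 1)) hQ
  simp only [sub_comp, pow_comp, add_comp, one_comp, X_comp, mul_comp] at hcomp
  have hB2 : B ^ 2 - X = (X - 1) ^ (n + 1) * Q.comp (X - 1) := by
    rw [hB, ← hcomp]; ring
  set g : Polynomial ℝ := expand ℝ 2 B with hg
  have hg2 : g ^ 2 - X ^ 2 = (X ^ 2 - 1) ^ (n + 1) * expand ℝ 2 (Q.comp (X - 1)) := by
    have h2 := congrArg (expand ℝ 2) hB2
    simp only [map_sub, map_pow, map_mul, expand_X, map_one] at h2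
    rw [hg, h2]
  set φ : Polynomial ℝ := g + X with hφ
  have hgodd : ∀ k, g.coeff (2 * k + 1) = 0 := by
    intro k
    rw [hg, coeff_expand (by norm_num)]
    rw [if_neg (by omega)]
  have hφodd : ∀ k, φ.coeff (2 * k + 1) = (if k = 0 then 1 else 0) := by
    intro k
    rw [hφ, coeff_add, hgodd, coeff_X, zero_add]
    rcases Nat.eq_zero_or_pos k with rfl | hk
    · norm_num
    · rw [if_neg (by omega), if_neg (by omega)]
  have hprime : Prime (X + 1 : Polynomial ℝ) := by
    have h1 := Polynomial.prime_X_sub_C (-1 : ℝ)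
    simpa [sub_neg_eq_add] using h1
  have hgeval : g.eval (-1) = 1 := by
    rw [hg, expand_eval, hB, eval_comp]
    norm_num
    rw [← coeff_zero_eq_eval_zero, hA0]
  have hnotdvd : ¬ (X + 1 : Polynomial ℝ) ∣ (g - X) := by
    rw [show (X + 1 : Polynomial ℝ) = X - C (-1) by simp, dvd_iff_isRoot]
    intro hroot
    have : (g - X).eval (-1) = 0 := hroot
    rw [eval_sub, eval_X, hgeval] at this
    norm_num at this
  have hdvd : (X + 1 : Polynomial ℝ) ^ (n + 1) ∣ φ := by
    refine hprime.pow_dvd_of_dvd_mul_right _ hnotdvd ?_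
    have hmul : φ * (g - X) = g ^ 2 - X ^ 2 := by rw [hφ]; ring
    rw [hmul, hg2]
    have hfac : (X ^ 2 - 1 : Polynomial ℝ) ^ (n + 1) = (X + 1) ^ (n + 1) * (X - 1) ^ (n + 1) := by
      rw [← mul_pow]; ring_nf
    rw [hfac, mul_assoc]
    exact dvd_mul_right _ _
  obtain ⟨ψ, hψ⟩ := hdvd
  have hφ1 : φ.coeff 1 = 1 := by simpa using hφodd 0
  have hφne : φ ≠ 0 := fun h => by rw [h] at hφ1; simp at hφ1
  have hψne : ψ ≠ 0 := by rintro rfl; rw [mul_zero] at hψ; exact hφne hψ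
  have hBdeg : B.natDegree ≤ n := by
    have := natDegree_comp_le (p := A) (q := (X - 1 : Polynomial ℝ))
    have h1 : (X - 1 : Polynomial ℝ).natDegree = 1 := by
      rw [show (X - 1 : Polynomial ℝ) = X - C 1 by rw [C_1]]
      exact natDegree_X_sub_C 1
    rw [hB]
    calc (A.comp (X-1)).natDegree ≤ A.natDegree * (X - 1 : Polynomial ℝ).natDegree := this
      _ ≤ n := by rw [h1]; omega
  have hφdeg : φ.natDegree ≤ 2 * n := by
    rw [hφ]
    apply (natDegree_add_le _ _).trans
    have hgd : g.natDegree ≤ 2 * n := by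
      rw [hg, natDegree_expand]; omega
    simp only [natDegree_X]
    omega
  have hXp1deg : ((X + 1 : Polynomial ℝ) ^ (n + 1)).natDegree = n + 1 := by
    rw [natDegree_pow]
    rw [show (X + 1 : Polynomial ℝ) = X + C 1 by rw [C_1], natDegree_X_add_C]
    ring
  have hψdeg : ψ.natDegree ≤ n - 1 := by
    have hmul := natDegree_mul (p := (X + 1 : Polynomial ℝ) ^ (n + 1)) (q := ψ)
      (pow_ne_zero _ (by
        intro h0
        have := congrArg (fun p : Polynomial ℝ => p.coeff 0) h0
        simp at this)) hψne
    rw [← hψ, hXp1deg] at hmul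
    omega
  set c : ℕ → ℝ := fun s => (ψ.comp (X - 1)).coeff s with hcdef
  have hψtdeg : (ψ.comp (X - 1)).natDegree < n := by
    have := natDegree_comp_le (p := ψ) (q := (X - 1 : Polynomial ℝ))
    have h1 : (X - 1 : Polynomial ℝ).natDegree = 1 := by
      rw [show (X - 1 : Polynomial ℝ) = X - C 1 by rw [C_1]]
      exact natDegree_X_sub_C 1
    rw [h1, mul_one] at this
    omega
  have hψcomp : ψ = (ψ.comp (X - 1)).comp (X + 1) := by
    rw [comp_assoc]
    have : (X - 1 : Polynomial ℝ).comp (X + 1) = X := by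
      simp [sub_comp]
    rw [this, comp_X]
  have e1 : ψ.comp (X - 1) = ∑ s ∈ range n, Polynomial.C (c s) * X ^ s := by
    conv_lhs => rw [as_sum_range' _ n hψtdeg]
    apply Finset.sum_congr rfl
    intro s _
    rw [C_mul_X_pow_eq_monomial]
  have e2 : φ = ∑ s ∈ range n, Polynomial.C (c s) * (X + 1) ^ (n + 1 + s) := by
    rw [hψ, hψcomp, e1, Polynomial.sum_comp, Finset.mul_sum]
    apply Finset.sum_congr rfl
    intro s _
    rw [mul_comp, C_comp, pow_comp, X_comp, pow_add]
    ring
  have hrep : ∀ k, φ.coeff k = ∑ s ∈ range n, c s * ((n + 1 + s).choose k : ℝ) := by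
    intro k
    rw [e2, finset_sum_coeff]
    apply Finset.sum_congr rfl
    intro s _
    rw [coeff_C_mul, coeff_X_add_one_pow]
  have final : x 0 = ∑ i ∈ range n, φ.coeff (2 * i + 1) * x i := by
    rw [Finset.sum_congr rfl (fun i (_ : i ∈ range n) => by rw [hφodd i])]
    rw [Finset.sum_eq_single 0]
    · simp
    · intro i _ hi; simp [hi]
    · intro h; exact absurd (Finset.mem_range.mpr hn) h
  have zero : ∑ i ∈ range n, φ.coeff (2 * i + 1) * x i = 0 := by
    calc ∑ i ∈ range n, φ.coeff (2 * i + 1) * x i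
        = ∑ i ∈ range n, ∑ s ∈ range n, c s * ((n + 1 + s).choose (2 * i + 1) : ℝ) * x i := by
          refine Finset.sum_congr rfl fun i _ => ?_
          rw [hrep, Finset.sum_mul]
      _ = ∑ s ∈ range n, ∑ i ∈ range n, c s * (((n + 1 + s).choose (2 * i + 1) : ℝ) * x i) := by
          rw [Finset.sum_comm]
          exact Finset.sum_congr rfl fun i _ => Finset.sum_congr rfl fun s _ => mul_assoc _ _ _
      _ = ∑ s ∈ range n, c s * ∑ i ∈ range n, ((n + 1 + s).choose (2 * i + 1) : ℝ) * x i := by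
          exact Finset.sum_congr rfl fun s _ => (Finset.mul_sum _ _ _).symm
      _ = 0 := Finset.sum_eq_zero fun s hs => by rw [hx s hs, mul_zero]
  rw [final, zero]

/-- Let `n ≥ 1`, `τ : ℝ`, and `M 1, M 3, …, M (2n-1)` real numbers with `M 1 ≠ 0`.
If for every `j ∈ {1, …, n}` one has
`Σ_{i=1}^{n} C(2n - j + 1, 2i - 1) * M (2i - 1) * τ^(2n - 2i - j + 2) = 0`
(terms with `2i - 1 > 2n - j + 1` interpreted as `0`), then `τ = 0`. -/
theorem slope_eq_zero_of_linear_system (n : ℕ) (hn : 1 ≤ n) (τ : ℝ)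
    (M : ℕ → ℝ) (hM : M 1 ≠ 0)
    (h : ∀ j : Fin n,
      ∑ i : Fin n,
        (if 2 * (i.val + 1) - 1 ≤ 2 * n - (j.val + 1) + 1 then
          ((2 * n - (j.val + 1) + 1).choose (2 * (i.val + 1) - 1) : ℝ) *
            M (2 * (i.val + 1) - 1) *
            τ ^ (2 * n + 2 - 2 * (i.val + 1) - (j.val + 1))
        else 0) = 0) :
    τ = 0 := by
  by_contra hτ
  set x : ℕ → ℝ := fun i => M (2 * i + 1) * τ ^ (2 * n - 2 * i) with hxdef
  have hkey : ∀ s ∈ Finset.range n,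
      ∑ i ∈ Finset.range n, ((n + 1 + s).choose (2 * i + 1) : ℝ) * x i = 0 := by
    intro s hs
    rw [Finset.mem_range] at hs
    have hj : ∑ i ∈ Finset.range n,
        (if 2 * (i + 1) - 1 ≤ 2 * n - (n - 1 - s + 1) + 1 then
          ((2 * n - (n - 1 - s + 1) + 1).choose (2 * (i + 1) - 1) : ℝ) *
            M (2 * (i + 1) - 1) *
            τ ^ (2 * n + 2 - 2 * (i + 1) - (n - 1 - s + 1))
        else 0) = 0 := by
      rw [← Fin.sum_univ_eq_sum_range]
      exact h ⟨n - 1 - s, by omega⟩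
    have hclean : ∑ i ∈ Finset.range n,
        (if 2 * i + 1 ≤ n + 1 + s then
          ((n + 1 + s).choose (2 * i + 1) : ℝ) * M (2 * i + 1) * τ ^ (n + s - 2 * i)
        else 0) = 0 := by
      refine Eq.trans (Finset.sum_congr rfl fun i hi => ?_) hj
      rw [Finset.mem_range] at hi
      have e1 : 2 * (i + 1) - 1 = 2 * i + 1 := by omega
      have e2 : 2 * n - (n - 1 - s + 1) + 1 = n + 1 + s := by omega
      rw [e1, e2]
      by_cases hc : 2 * i + 1 ≤ n + 1 + s
      · rw [if_pos hc, if_pos hc]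
        congr 2
        omega
      · rw [if_neg hc, if_neg hc]
    have hmul := congrArg (fun y : ℝ => y * τ ^ (n - s)) hclean
    simp only [zero_mul] at hmul
    rw [Finset.sum_mul] at hmul
    rw [← hmul]
    refine Finset.sum_congr rfl fun i hi => ?_
    rw [Finset.mem_range] at hi
    by_cases hc : 2 * i + 1 ≤ n + 1 + s
    · rw [if_pos hc]
      have hpow : τ ^ (n + s - 2 * i) * τ ^ (n - s) = τ ^ (2 * n - 2 * i) := by
        rw [← pow_add]
        congr 1
        omega
      show ((n + 1 + s).choose (2 * i + 1) : ℝ) * (M (2 * i + 1) * τ ^ (2 * n - 2 * i))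
          = ((n + 1 + s).choose (2 * i + 1) : ℝ) * M (2 * i + 1) * τ ^ (n + s - 2 * i) * τ ^ (n - s)
      rw [mul_assoc _ _ (τ ^ (n - s)), hpow]
      ring
    · rw [if_neg hc, zero_mul]
      have hch : (n + 1 + s).choose (2 * i + 1) = 0 := Nat.choose_eq_zero_of_lt (by omega)
      rw [hch]
      simp
  have hx0 := key_lemma n hn x hkey
  have hval : x 0 = M 1 * τ ^ (2 * n) := by rw [hxdef]; norm_num
  rw [hval] at hx0
  exact (mul_ne_zero hM (pow_ne_zero _ hτ)) hx0
end
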